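/- Let 𝒜 be a finite alphabet with d ≥ 2 symbols, let π = (π₀, π₁) be an irreducible combinatorial data on 𝒜, let ε ∈ {0,1}, and let π' = r_ε(π). Then Θ_{π,ε}⁻¹(C^s_{π'}) ⊆ C^s_π, where C^s_π = Ω_π(ℝ^𝒜_{>0}) is the image under Ω_π of the set of vectors with all coordinates positive. -/

import Mathlib

open Matrix

/-- The top element of `Fin d` (corresponding to the value `d` in `{1, …, d}`). -/
def finTop (d : ℕ) (hd : 0 < d) : Fin d := ⟨d - 1, by omega⟩

/-- The matrix `Ω_π` associated to the combinatorial data `π = (p0, p1)`. -/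
def rvOmega {A : Type*} [Fintype A] (d : ℕ) (p0 p1 : A ≃ Fin d) :
    Matrix A A ℝ :=
  Matrix.of fun α β =>
    if p1 β < p1 α ∧ p0 α < p0 β then (1 : ℝ)
    else if p1 α < p1 β ∧ p0 β < p0 α then -1
    else 0

/-- The combinatorial data `π = (p0, p1)` is irreducible. -/
def rvIrreducible {A : Type*} (d : ℕ) (p0 p1 : A ≃ Fin d) : Prop :=
  ∀ j : ℕ, 1 ≤ j → j ≤ d - 1 →
    {α : A | (p0 α : ℕ) < j} ≠ {α : A | (p1 α : ℕ) < j}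

/-- The Rauzy–Veech update of the loser-side permutation; `e = π_ε` (winner side),
`f = π_{1−ε}` (the side being updated). -/
def rvUpdate {A : Type*} (d : ℕ) (hd : 0 < d) (e f : A ≃ Fin d) (α : A) : Fin d :=
  haveI : NeZero d := ⟨hd.ne'⟩
  if f α ≤ f (e.symm (finTop d hd)) then f α
  else if f α < finTop d hd then f α + 1
  else f (e.symm (finTop d hd)) + 1

/-- The Rauzy–Veech matrix `Θ_{π,ε} = I + E_{α(1−ε), α(ε)}`. -/
def rvTheta {A : Type*} [Fintype A] [DecidableEq A] (d : ℕ) (hd : 0 < d)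
    (e f : A ≃ Fin d) : Matrix A A ℝ :=
  1 + Matrix.single (f.symm (finTop d hd)) (e.symm (finTop d hd)) 1

/-- The stable cone `C^s_π = Ω_π(ℝ^𝒜_{>0})`. -/
def rvConeS {A : Type*} [Fintype A] (d : ℕ) (p0 p1 : A ≃ Fin d) : Set (A → ℝ) :=
  (rvOmega d p0 p1).mulVec '' {u : A → ℝ | ∀ α, 0 < u α}

/-!
The Rauzy–Veech step moves the loser `l` to the position just after the winner `w` on the
updated row, and this changes `Ω` by adding row `w` to row `l` and column `w` to column `l`:
`Ω_{π'} = Θ Ω_π Θᵀ` with `Θ = 1 + E_{l w}`. Hence `Θ⁻¹ Ω_{π'} u = Ω_π (Θᵀ u)`, and `Θᵀ u` is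
positive whenever `u` is, because `Θᵀ` has nonnegative entries and unit diagonal.
-/

namespace Matrix

variable {n : Type*} [DecidableEq n]

lemma transpose_transvection {R : Type*} [CommRing R] (i j : n) (c : R) :
    (transvection i j c)ᵀ = transvection j i c := by
  simp [transvection]

variable [Fintype n]

lemma mapsTo_transvection_mulVec_pos {i j : n} {c : ℝ} (hc : 0 ≤ c) :
    Set.MapsTo (transvection i j c).mulVec {u | ∀ a, 0 < u a} {u | ∀ a, 0 < u a} := by
  intro u hu a
  have hcu : 0 ≤ Function.update (0 : n → ℝ) i (c * u j) a := by
    rw [Function.update_apply]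
    split_ifs
    exacts [mul_nonneg hc (hu j).le, le_rfl]
  simpa only [transvection, add_mulVec, one_mulVec, Pi.add_apply, single_mulVec]
    using add_pos_of_pos_of_nonneg (hu a) hcu

lemma image_inv_mulVec_image_conj_subset {R : Type*} [CommRing R] {Θ M : Matrix n n R}
    (hΘ : IsUnit Θ.det) {P : Set (n → R)} (hP : Set.MapsTo Θᵀ.mulVec P P) :
    Θ⁻¹.mulVec '' ((Θ * M * Θᵀ).mulVec '' P) ⊆ M.mulVec '' P := by
  rintro _ ⟨_, ⟨u, hu, rfl⟩, rfl⟩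
  refine ⟨Θᵀ *ᵥ u, hP hu, ?_⟩
  rw [mulVec_mulVec, mulVec_mulVec, ← mul_assoc, ← mul_assoc, nonsing_inv_mul _ hΘ, one_mul]

end Matrix

section RauzyVeech

variable {A : Type*} {d : ℕ}

/-- `lastLetter hd (π ε)` is the winner `α(ε)`, `lastLetter hd (π !ε)` the loser. -/
def lastLetter (hd : 0 < d) (p : A ≃ Fin d) : A := p.symm (finTop d hd)

@[simp]
lemma apply_lastLetter (hd : 0 < d) (p : A ≃ Fin d) : p (lastLetter hd p) = finTop d hd :=
  p.apply_symm_apply _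

@[simp]
lemma val_finTop (hd : 0 < d) : (finTop d hd : ℕ) = d - 1 := rfl

lemma eq_lastLetter_iff (hd : 0 < d) (p : A ≃ Fin d) {γ : A} :
    γ = lastLetter hd p ↔ (p γ : ℕ) = d - 1 := by
  rw [lastLetter, Equiv.eq_symm_apply, Fin.ext_iff]
  rfl

lemma val_lt_of_ne_lastLetter {hd : 0 < d} {p : A ≃ Fin d} {γ : A} (hγ : γ ≠ lastLetter hd p) :
    (p γ : ℕ) < d - 1 := by
  have := (p γ).isLt
  rw [ne_eq, eq_lastLetter_iff] at hγ
  omega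

lemma rvIrreducible.lastLetter_ne {p0 p1 : A ≃ Fin d} (hirr : rvIrreducible d p0 p1)
    (hd : 2 ≤ d) :
    lastLetter (Nat.zero_lt_of_lt hd) p0 ≠ lastLetter (Nat.zero_lt_of_lt hd) p1 := by
  intro h
  have lt_iff (p : A ≃ Fin d) (γ : A) :
      (p γ : ℕ) < d - 1 ↔ γ ≠ lastLetter (Nat.zero_lt_of_lt hd) p := by
    have := (p γ).isLt
    rw [ne_eq, eq_lastLetter_iff]
    omega
  refine hirr (d - 1) (by omega) le_rfl (Set.ext fun γ => ?_)
  simp only [Set.mem_ofPred_eq, lt_iff, h]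

section Omega

variable [Fintype A]

@[simp]
lemma rvOmega_apply_self (p q : A ≃ Fin d) (α : A) : rvOmega d p q α α = 0 := by
  simp [rvOmega]

lemma rvOmega_apply_comm (p q : A ≃ Fin d) (α β : A) :
    rvOmega d p q β α = -rvOmega d p q α β := by
  simp only [rvOmega, of_apply, Fin.lt_def]
  split_ifs <;> first | (exfalso; omega) | norm_num

lemma rvOmega_swap (p q : A ≃ Fin d) : rvOmega d q p = -rvOmega d p q := by
  ext α β
  rw [neg_apply, ← rvOmega_apply_comm]
  simp only [rvOmega, of_apply, and_comm]

lemma rvTheta_eq_transvection [DecidableEq A] (hd : 0 < d) (e f : A ≃ Fin d) :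
    rvTheta d hd e f = transvection (lastLetter hd f) (lastLetter hd e) 1 := rfl

end Omega

variable [DecidableEq A] {hd : 0 < d} {e f f' : A ≃ Fin d}
  (hf' : ∀ γ, f' γ = rvUpdate d hd e f γ) (hwl : lastLetter hd e ≠ lastLetter hd f)
include hf' hwl

lemma val_rvUpdate (γ : A) :
    (f' γ : ℕ) = if γ = lastLetter hd f then (f (lastLetter hd e) : ℕ) + 1
      else if f γ ≤ f (lastLetter hd e) then (f γ : ℕ) else f γ + 1 := by
  have hw := val_lt_of_ne_lastLetter hwl
  have : NeZero d := ⟨hd.ne'⟩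
  have hsucc (x : Fin d) (hx : (x : ℕ) < d - 1) : ((x + 1 : Fin d) : ℕ) = x + 1 :=
    Fin.val_add_one_of_lt' (by omega)
  rw [hf', rvUpdate, show e.symm (finTop d hd) = lastLetter hd e from rfl]
  by_cases hγ : γ = lastLetter hd f
  · subst hγ
    have : ¬ finTop d hd ≤ f (lastLetter hd e) := by rw [Fin.le_def, val_finTop]; omega
    rw [if_pos rfl, apply_lastLetter, if_neg this, if_neg (lt_irrefl _), hsucc _ hw]
  · have hγ' := val_lt_of_ne_lastLetter hγ
    rw [if_neg hγ, if_pos (show f γ < finTop d hd from hγ')]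
    split_ifs
    exacts [rfl, hsucc _ hγ']

lemma rvUpdate_lt_rvUpdate_iff {α β : A} (hα : α ≠ lastLetter hd f)
    (hβ : β ≠ lastLetter hd f) : f' α < f' β ↔ f α < f β := by
  rw [Fin.lt_def, Fin.lt_def, val_rvUpdate hf' hwl, val_rvUpdate hf' hwl, if_neg hα, if_neg hβ]
  split_ifs <;> omega

lemma rvUpdate_lt_rvUpdate_lastLetter_iff {β : A} (hβ : β ≠ lastLetter hd f) :
    f' β < f' (lastLetter hd f) ↔ f β ≤ f (lastLetter hd e) := by
  rw [Fin.lt_def, Fin.le_def, val_rvUpdate hf' hwl, val_rvUpdate hf' hwl, if_neg hβ, if_pos rfl]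
  split_ifs <;> omega

lemma rvUpdate_lastLetter_lt_rvUpdate_iff {β : A} (hβ : β ≠ lastLetter hd f) :
    f' (lastLetter hd f) < f' β ↔ f (lastLetter hd e) < f β := by
  rw [Fin.lt_def, Fin.lt_def, val_rvUpdate hf' hwl, val_rvUpdate hf' hwl, if_neg hβ, if_pos rfl]
  split_ifs <;> omega

variable [Fintype A]

lemma rvOmega_rvUpdate_apply_of_ne {α β : A} (hα : α ≠ lastLetter hd f)
    (hβ : β ≠ lastLetter hd f) : rvOmega d e f' α β = rvOmega d e f α β := by
  simp only [rvOmega, of_apply, rvUpdate_lt_rvUpdate_iff hf' hwl hα hβ,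
    rvUpdate_lt_rvUpdate_iff hf' hwl hβ hα]

lemma rvOmega_rvUpdate_lastLetter_apply {β : A} (hβ : β ≠ lastLetter hd f) :
    rvOmega d e f' (lastLetter hd f) β =
      rvOmega d e f (lastLetter hd f) β + rvOmega d e f (lastLetter hd e) β := by
  have hl := val_lt_of_ne_lastLetter hwl.symm
  have hw := val_lt_of_ne_lastLetter hwl
  have hfβ := val_lt_of_ne_lastLetter hβ
  have heβ := Fin.val_injective.ne (e.injective.ne hβ)
  simp only [rvOmega, of_apply]
  simp only [rvUpdate_lt_rvUpdate_lastLetter_iff hf' hwl hβ,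
    rvUpdate_lastLetter_lt_rvUpdate_iff hf' hwl hβ, apply_lastLetter, Fin.lt_def, Fin.le_def,
    val_finTop]
  rcases eq_or_ne β (lastLetter hd e) with rfl | hβw
  · simp only [apply_lastLetter, val_finTop]
    split_ifs <;> first | (exfalso; omega) | norm_num
  · have := val_lt_of_ne_lastLetter hβw
    have := Fin.val_injective.ne (f.injective.ne hβw)
    split_ifs <;> first | (exfalso; omega) | norm_num

lemma rvOmega_rvUpdate :
    rvOmega d e f' = rvTheta d hd e f * rvOmega d e f * (rvTheta d hd e f)ᵀ := by
  rw [rvTheta_eq_transvection, transpose_transvection, Matrix.mul_assoc]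
  ext α β
  rcases eq_or_ne α (lastLetter hd f) with rfl | hα <;>
    rcases eq_or_ne β (lastLetter hd f) with rfl | hβ
  · simp [rvOmega_apply_comm e f (lastLetter hd f) (lastLetter hd e)]
  · simp [rvOmega_rvUpdate_lastLetter_apply hf' hwl hβ, hβ]
  · rw [rvOmega_apply_comm, rvOmega_rvUpdate_lastLetter_apply hf' hwl hα]
    simp [hα, rvOmega_apply_comm e f α, add_comm]
  · simp [rvOmega_rvUpdate_apply_of_ne hf' hwl hα hβ, hα, hβ]

lemma rvOmega_swap_rvUpdate :
    rvOmega d f' e = rvTheta d hd e f * rvOmega d f e * (rvTheta d hd e f)ᵀ := by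
  rw [rvOmega_swap, rvOmega_rvUpdate hf' hwl, rvOmega_swap f e, Matrix.mul_neg, Matrix.neg_mul,
    neg_neg]

end RauzyVeech

/-- Let `π` be an irreducible combinatorial data on an alphabet with
`d ≥ 2` symbols, `ε ∈ {0,1}` and `π' = r_ε(π)`.  Then
`Θ_{π,ε}⁻¹ (C^s_{π'}) ⊆ C^s_π`. -/
theorem stmt17 {A : Type*} [Fintype A] [DecidableEq A] (d : ℕ) (hd : 2 ≤ d)
    (π π' : Bool → A ≃ Fin d) (ε : Bool)
    (hirr : rvIrreducible d (π false) (π true))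
    (hkeep : π' ε = π ε)
    (hupd : ∀ α, (π' (!ε)) α = rvUpdate d (by omega) (π ε) (π (!ε)) α) :
    (fun v => (rvTheta d (by omega) (π ε) (π (!ε)))⁻¹.mulVec v) ''
        rvConeS d (π' false) (π' true) ⊆ rvConeS d (π false) (π true) := by
  have hd0 : 0 < d := by omega
  have hwl : lastLetter hd0 (π ε) ≠ lastLetter hd0 (π !ε) := by
    cases ε
    exacts [hirr.lastLetter_ne hd, (hirr.lastLetter_ne hd).symm]
  have hΩ : rvOmega d (π' false) (π' true) = rvTheta d hd0 (π ε) (π !ε) *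
      rvOmega d (π false) (π true) * (rvTheta d hd0 (π ε) (π !ε))ᵀ := by
    cases ε
    · rw [hkeep]
      exact rvOmega_rvUpdate hupd hwl
    · rw [hkeep]
      exact rvOmega_swap_rvUpdate hupd hwl
  rw [rvConeS, rvConeS, hΩ, rvTheta_eq_transvection]
  refine image_inv_mulVec_image_conj_subset ?_ ?_
  · rw [det_transvection_of_ne _ _ hwl.symm]
    exact isUnit_one
  · rw [transpose_transvection]
    exact mapsTo_transvection_mulVec_pos zero_le_one
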